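/- arXiv:solv-int/9807008 — 3 statements merged into one kernel-verified Lean document; each statement's English description precedes it below -/
import Mathlib

section
/- One has the identity M(u;ũ)⁻¹ σ³ M(u;ũ) = (θ₁₁(u)θ₁₁(ũ))⁻¹ · [[-θ₀₁(u)θ₀₁(ũ), -θ₀₁·θ₀₁(u+ũ)], [θ₀₁·θ₀₁(u-ũ), θ₀₁(u)θ₀₁(ũ)]], valid whenever det M(u;ũ) ≠ 0. -/
open Complex Matrix

/-- Jacobi theta function with characteristics `a, b ∈ {0,1}`. -/
noncomputable def jTheta (a b : ℤ) (u τ : ℂ) : ℂ :=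
  ∑' n : ℤ, Complex.exp (Real.pi * Complex.I * ((n : ℂ) + a / 2) ^ 2 * τ +
    2 * Real.pi * Complex.I * ((n : ℂ) + a / 2) * (u + b / 2))

/-- The gauge-transformation matrix `M(u;ũ)`. -/
noncomputable def gaugeM (τ u utilde : ℂ) : Matrix (Fin 2) (Fin 2) ℂ :=
  !![ - jTheta 0 1 ((u - utilde) / 2) (τ / 2), - jTheta 0 1 ((u + utilde) / 2) (τ / 2);
      jTheta 0 0 ((u - utilde) / 2) (τ / 2), jTheta 0 0 ((u + utilde) / 2) (τ / 2)]

/-!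
Landen's transformation, obtained by splitting the double series of `θ(X; τ) θ(Y; τ)` according
to the parity of `m + n`, expresses the products of theta functions of modulus `τ/2` that make up
`M(u; ũ)` through those of modulus `τ`:
`θ₀₁((x+y)/2; τ/2) θ₀₀((x-y)/2; τ/2) = θ₀₁(x) θ₀₁(y) ± θ₁₁(x) θ₁₁(y)`, with `+`, and with `-`
after exchanging the characteristics on the left. Taking `(x, y) = (u, ũ)`, and `(u ± ũ, 0)` where
`θ₁₁(0) = 0`, gives `det M = 2 θ₁₁(u) θ₁₁(ũ)` and `M N = θ₁₁(u) θ₁₁(ũ) σ³ M` for the matrix `N` on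
the right-hand side; conjugating by `M` gives the claim.
-/

open scoped Real

lemma jTheta_eq_exp_mul_jacobiTheta₂ (a b : ℤ) (u τ : ℂ) :
    jTheta a b u τ = Complex.exp (π * I * τ * a ^ 2 / 4 + π * I * a * (u + b / 2)) *
      jacobiTheta₂ (u + b / 2 + a * τ / 2) τ := by
  rw [jacobiTheta₂, ← tsum_mul_left, jTheta]
  refine tsum_congr fun n => ?_
  rw [jacobiTheta₂_term, ← Complex.exp_add]
  congr 1
  ring

lemma jTheta_zero_zero (u τ : ℂ) : jTheta 0 0 u τ = jacobiTheta₂ u τ := by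
  simp [jTheta_eq_exp_mul_jacobiTheta₂]

lemma jTheta_zero_one (u τ : ℂ) : jTheta 0 1 u τ = jacobiTheta₂ (u + 1 / 2) τ := by
  simp [jTheta_eq_exp_mul_jacobiTheta₂]

lemma jTheta_one_one (u τ : ℂ) : jTheta 1 1 u τ =
    Complex.exp (π * I * τ / 4 + π * I * (u + 1 / 2)) * jacobiTheta₂ (u + 1 / 2 + τ / 2) τ := by
  simp [jTheta_eq_exp_mul_jacobiTheta₂]

lemma jacobiTheta₂_half_add_half_eq_zero (τ : ℂ) : jacobiTheta₂ (1 / 2 + τ / 2) τ = 0 := by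
  have h := jacobiTheta₂_add_left' (-(1 / 2 + τ / 2)) τ
  rw [jacobiTheta₂_neg_left, show -(1 / 2 + τ / 2) + τ = 1 / 2 + τ / 2 - 1 by ring,
    ← jacobiTheta₂_add_left, sub_add_cancel,
    show -π * I * (τ + 2 * -(1 / 2 + τ / 2)) = π * I by ring,
    Complex.exp_pi_mul_I] at h
  linear_combination h / 2

lemma jTheta_one_one_zero (τ : ℂ) : jTheta 1 1 0 τ = 0 := by
  rw [jTheta_one_one, zero_add, jacobiTheta₂_half_add_half_eq_zero, mul_zero]

/-- Splits `ℤ × ℤ` by the parity `b` of `m + n`: the image of `(b, p, q)` has `m + n = 2p + b`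
and `m - n = 2q + b`. -/
def parityPairEquiv : Bool × ℤ × ℤ ≃ ℤ × ℤ where
  toFun x := (x.2.1 + x.2.2 + x.1.toNat, x.2.1 - x.2.2)
  invFun mn := if (mn.1 + mn.2) % 2 = 0
    then (false, ((mn.1 + mn.2) / 2, (mn.1 - mn.2) / 2))
    else (true, ((mn.1 + mn.2 - 1) / 2, (mn.1 - mn.2 - 1) / 2))
  left_inv := by
    rintro ⟨_ | _, p, q⟩ <;>
      simp only [Bool.toNat_false, Bool.toNat_true, Nat.cast_zero, Nat.cast_one] <;>
      split_ifs <;> simp only [Prod.mk.injEq, true_and] <;> omega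
  right_inv := by
    rintro ⟨m, n⟩
    dsimp only
    split_ifs <;> simp only [Bool.toNat_false, Bool.toNat_true, Nat.cast_zero, Nat.cast_one,
      Prod.mk.injEq] <;> omega

section

variable {τ : ℂ}

lemma summable_norm_jacobiTheta₂_term (z : ℂ) (hτ : 0 < τ.im) :
    Summable fun n : ℤ => ‖jacobiTheta₂_term n z τ‖ :=
  summable_norm_iff.mpr ((summable_jacobiTheta₂_term_iff z τ).mpr hτ)

lemma jacobiTheta₂_mul_jacobiTheta₂_eq_tsum (z w : ℂ) (hτ : 0 < τ.im) :
    jacobiTheta₂ z τ * jacobiTheta₂ w τ =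
      ∑' mn : ℤ × ℤ, jacobiTheta₂_term mn.1 z τ * jacobiTheta₂_term mn.2 w τ :=
  tsum_mul_tsum_of_summable_norm (summable_norm_jacobiTheta₂_term z hτ)
    (summable_norm_jacobiTheta₂_term w hτ)

lemma jacobiTheta₂_term_mul_parityPairEquiv_false (pq : ℤ × ℤ) (X Y : ℂ) :
    jacobiTheta₂_term (parityPairEquiv (false, pq)).1 X τ *
        jacobiTheta₂_term (parityPairEquiv (false, pq)).2 Y τ =
      jacobiTheta₂_term pq.1 (X + Y) (2 * τ) * jacobiTheta₂_term pq.2 (X - Y) (2 * τ) := by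
  simp only [parityPairEquiv, Equiv.coe_fn_mk, Bool.toNat_false, jacobiTheta₂_term,
    ← Complex.exp_add]
  congr 1
  push_cast
  ring

lemma jacobiTheta₂_term_mul_parityPairEquiv_true (pq : ℤ × ℤ) (X Y : ℂ) :
    jacobiTheta₂_term (parityPairEquiv (true, pq)).1 X τ *
        jacobiTheta₂_term (parityPairEquiv (true, pq)).2 Y τ =
      Complex.exp (π * I * τ + 2 * π * I * X) *
        (jacobiTheta₂_term pq.1 (X + Y + τ) (2 * τ) *
          jacobiTheta₂_term pq.2 (X - Y + τ) (2 * τ)) := by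
  simp only [parityPairEquiv, Equiv.coe_fn_mk, Bool.toNat_true, jacobiTheta₂_term,
    ← Complex.exp_add]
  congr 1
  push_cast
  ring

theorem jacobiTheta₂_mul_jacobiTheta₂ (hτ : 0 < τ.im) (X Y : ℂ) :
    jacobiTheta₂ X τ * jacobiTheta₂ Y τ =
      jacobiTheta₂ (X + Y) (2 * τ) * jacobiTheta₂ (X - Y) (2 * τ) +
      Complex.exp (π * I * τ + 2 * π * I * X) *
        (jacobiTheta₂ (X + Y + τ) (2 * τ) * jacobiTheta₂ (X - Y + τ) (2 * τ)) := by
  have h2τ : 0 < (2 * τ).im := by simpa using hτ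
  set F : ℤ × ℤ → ℂ := fun mn => jacobiTheta₂_term mn.1 X τ * jacobiTheta₂_term mn.2 Y τ
  have hF : Summable (F ∘ parityPairEquiv) :=
    parityPairEquiv.summable_iff.mpr <| summable_mul_of_summable_norm
      (f := (jacobiTheta₂_term · X τ)) (g := (jacobiTheta₂_term · Y τ))
      (summable_norm_jacobiTheta₂_term X hτ) (summable_norm_jacobiTheta₂_term Y hτ)
  calc jacobiTheta₂ X τ * jacobiTheta₂ Y τ
      = ∑' mn : ℤ × ℤ, F mn := jacobiTheta₂_mul_jacobiTheta₂_eq_tsum X Y hτ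
    _ = ∑' b : Bool, ∑' pq : ℤ × ℤ, F (parityPairEquiv (b, pq)) := by
      rw [← parityPairEquiv.tsum_eq]
      exact hF.tsum_prod' hF.prod_factor
    _ = _ := by
      rw [tsum_bool, jacobiTheta₂_mul_jacobiTheta₂_eq_tsum _ _ h2τ,
        jacobiTheta₂_mul_jacobiTheta₂_eq_tsum _ _ h2τ, ← tsum_mul_left]
      simp only [F, jacobiTheta₂_term_mul_parityPairEquiv_false,
        jacobiTheta₂_term_mul_parityPairEquiv_true]

lemma jTheta_zero_one_mul_jTheta_zero_zero_half (hτ : 0 < τ.im) (x y : ℂ) :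
    jTheta 0 1 ((x + y) / 2) (τ / 2) * jTheta 0 0 ((x - y) / 2) (τ / 2) =
      jTheta 0 1 x τ * jTheta 0 1 y τ + jTheta 1 1 x τ * jTheta 1 1 y τ := by
  obtain ⟨s, d, rfl, rfl⟩ : ∃ s d : ℂ, x = s + d ∧ y = s - d :=
    ⟨(x + y) / 2, (x - y) / 2, by ring, by ring⟩
  rw [show (s + d + (s - d)) / 2 = s by ring, show (s + d - (s - d)) / 2 = d by ring]
  have H := jacobiTheta₂_mul_jacobiTheta₂ (by simpa using hτ : 0 < (τ / 2).im) (s + 1 / 2) d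
  have hexp : Complex.exp (π * I * (τ / 2) + 2 * π * I * (s + 1 / 2)) =
      Complex.exp (π * I * τ / 4 + π * I * (s + d + 1 / 2)) *
        Complex.exp (π * I * τ / 4 + π * I * (s - d + 1 / 2)) := by
    rw [← Complex.exp_add]; congr 1; ring
  rw [mul_div_cancel₀ τ two_ne_zero, hexp, add_right_comm s, add_sub_right_comm s] at H
  rw [jTheta_zero_one, jTheta_zero_zero, jTheta_zero_one, jTheta_zero_one, jTheta_one_one,
    jTheta_one_one, H]
  ring

lemma jTheta_zero_zero_mul_jTheta_zero_one_half (hτ : 0 < τ.im) (x y : ℂ) :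
    jTheta 0 0 ((x + y) / 2) (τ / 2) * jTheta 0 1 ((x - y) / 2) (τ / 2) =
      jTheta 0 1 x τ * jTheta 0 1 y τ - jTheta 1 1 x τ * jTheta 1 1 y τ := by
  obtain ⟨s, d, rfl, rfl⟩ : ∃ s d : ℂ, x = s + d ∧ y = s - d :=
    ⟨(x + y) / 2, (x - y) / 2, by ring, by ring⟩
  rw [show (s + d + (s - d)) / 2 = s by ring, show (s + d - (s - d)) / 2 = d by ring]
  have H := jacobiTheta₂_mul_jacobiTheta₂ (by simpa using hτ : 0 < (τ / 2).im) s (d + 1 / 2)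
  -- the shift `s - d - 1/2 ↦ s - d + 1/2` by a period costs the sign `exp (π i) = -1`
  have hexp : Complex.exp (π * I * (τ / 2) + 2 * π * I * s) =
      -(Complex.exp (π * I * τ / 4 + π * I * (s + d + 1 / 2)) *
        Complex.exp (π * I * τ / 4 + π * I * (s - d + 1 / 2))) := by
    rw [← Complex.exp_add, show π * I * τ / 4 + π * I * (s + d + 1 / 2) +
        (π * I * τ / 4 + π * I * (s - d + 1 / 2)) = π * I * (τ / 2) + 2 * π * I * s + π * I by ring,
      Complex.exp_add (_ + _), Complex.exp_pi_mul_I]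
    ring
  have hper (z : ℂ) : jacobiTheta₂ (z - 1) τ = jacobiTheta₂ z τ := by
    rw [← jacobiTheta₂_add_left, sub_add_cancel]
  rw [mul_div_cancel₀ τ two_ne_zero, hexp, ← add_assoc,
    show s - (d + 1 / 2) + τ / 2 = s - d + 1 / 2 + τ / 2 - 1 by ring,
    show s - (d + 1 / 2) = s - d + 1 / 2 - 1 by ring, hper, hper] at H
  rw [jTheta_zero_one, jTheta_zero_zero, jTheta_zero_one, jTheta_zero_one, jTheta_one_one,
    jTheta_one_one, H]
  ring

lemma det_gaugeM (u utilde : ℂ) (hτ : 0 < τ.im) :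
    (gaugeM τ u utilde).det = 2 * (jTheta 1 1 u τ * jTheta 1 1 utilde τ) := by
  rw [gaugeM, det_fin_two_of]
  linear_combination jTheta_zero_one_mul_jTheta_zero_zero_half hτ u utilde -
    jTheta_zero_zero_mul_jTheta_zero_one_half hτ u utilde

lemma gaugeM_mul_eq_smul_sigma3_mul_gaugeM (u utilde : ℂ) (hτ : 0 < τ.im) :
    gaugeM τ u utilde *
        !![ - jTheta 0 1 u τ * jTheta 0 1 utilde τ,
            - jTheta 0 1 0 τ * jTheta 0 1 (u + utilde) τ;
            jTheta 0 1 0 τ * jTheta 0 1 (u - utilde) τ,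
            jTheta 0 1 u τ * jTheta 0 1 utilde τ] =
      (jTheta 1 1 u τ * jTheta 1 1 utilde τ) •
        ((!![1, 0; 0, -1] : Matrix (Fin 2) (Fin 2) ℂ) * gaugeM τ u utilde) := by
  have hA := jTheta_zero_one_mul_jTheta_zero_zero_half hτ u utilde
  have hB := jTheta_zero_zero_mul_jTheta_zero_one_half hτ u utilde
  have hD := jTheta_zero_one_mul_jTheta_zero_zero_half hτ (u - utilde) 0
  have hS := jTheta_zero_one_mul_jTheta_zero_zero_half hτ (u + utilde) 0
  simp only [add_zero, sub_zero, jTheta_one_one_zero, mul_zero] at hD hS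
  rw [gaugeM, mul_fin_two, mul_fin_two]
  ext i j
  fin_cases i <;> fin_cases j <;>
    simp only [Fin.zero_eta, Fin.mk_one, Fin.isValue, of_apply, cons_val', cons_val_zero,
      cons_val_one, cons_val_fin_one, Matrix.smul_apply, smul_eq_mul]
  · linear_combination jTheta 0 1 ((u + utilde) / 2) (τ / 2) * hD -
      jTheta 0 1 ((u - utilde) / 2) (τ / 2) * hA
  · linear_combination jTheta 0 1 ((u + utilde) / 2) (τ / 2) * hB -
      jTheta 0 1 ((u - utilde) / 2) (τ / 2) * hS
  · linear_combination jTheta 0 0 ((u - utilde) / 2) (τ / 2) * hB -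
      jTheta 0 0 ((u + utilde) / 2) (τ / 2) * hD
  · linear_combination jTheta 0 0 ((u - utilde) / 2) (τ / 2) * hS -
      jTheta 0 0 ((u + utilde) / 2) (τ / 2) * hA

end

/-- The identity
`M(u;ũ)⁻¹ σ³ M(u;ũ) = (θ₁₁(u)θ₁₁(ũ))⁻¹ [[-θ₀₁(u)θ₀₁(ũ), -θ₀₁ θ₀₁(u+ũ)],
[θ₀₁ θ₀₁(u-ũ), θ₀₁(u)θ₀₁(ũ)]]`, valid whenever `det M(u;ũ) ≠ 0`. -/
theorem gaugeM_conj_sigma3 (τ : ℂ) (hτ : 0 < τ.im) (u utilde : ℂ)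
    (hdet : (gaugeM τ u utilde).det ≠ 0) :
    (gaugeM τ u utilde)⁻¹ * (!![1, 0; 0, -1] : Matrix (Fin 2) (Fin 2) ℂ) * gaugeM τ u utilde =
      (jTheta 1 1 u τ * jTheta 1 1 utilde τ)⁻¹ •
        !![ - jTheta 0 1 u τ * jTheta 0 1 utilde τ,
            - jTheta 0 1 0 τ * jTheta 0 1 (u + utilde) τ;
            jTheta 0 1 0 τ * jTheta 0 1 (u - utilde) τ,
            jTheta 0 1 u τ * jTheta 0 1 utilde τ] := by
  have hQ : jTheta 1 1 u τ * jTheta 1 1 utilde τ ≠ 0 := by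
    rw [det_gaugeM u utilde hτ] at hdet
    exact right_ne_zero_of_mul hdet
  rw [Matrix.mul_assoc, ← inv_smul_smul₀ hQ (_ * gaugeM τ u utilde),
    ← gaugeM_mul_eq_smul_sigma3_mul_gaugeM u utilde hτ, Matrix.mul_smul,
    nonsing_inv_mul_cancel_left _ _ hdet.isUnit]
end

section
/- Define on the space V^{(ℓ)} = span{1, η, …, η^{2ℓ}} of polynomials of degree ≤ 2ℓ the operators S^α = a_α(((e_α-e_β)(e_α-e_γ) - (η-e_α)²)d/dη + 2ℓ(η-e_α)) for (α,β,γ) a cyclic permutation of (1,2,3), with a₁ = 1/(√(e₁-e₂)√(e₁-e₃)), a₂ = i/(√(e₁-e₂)√(e₂-e₃)), a₃ = 1/(√(e₂-e₃)√(e₁-e₃)), where e₁+e₂+e₃ = 0. Then [S^a, S^b] = 2i S^c for every cyclic permutation (a,b,c) of (1,2,3); in particular these operators define a representation of sl₂(ℂ). -/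
open Complex Polynomial

/-!
Up to the scalar `a_α`, each `S^α` is the first-order operator
`T_α = ((e_α-e_β)(e_α-e_γ) - (η-e_α)²) d/dη + n (η-e_α)`. When `e₁ + e₂ + e₃ = 0` a direct
polynomial computation gives `[T_α, T_β] = 2 (e_α - e_β) T_γ` for cyclic `(α,β,γ)`, and the
normalisations `a_α` are chosen so that `a_α a_β (e_α - e_β) = i a_γ`, which follows from
`s_{αβ}² = e_α - e_β`.
-/

/-- The operator `S^α = a_α(((e_α-e_β)(e_α-e_γ) - (η-e_α)²) d/dη + 2ℓ(η-e_α))`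
on polynomials in `η`, where `n = 2ℓ`. -/
noncomputable def Sop (a eα eβ eγ : ℂ) (n : ℕ) (f : Polynomial ℂ) : Polynomial ℂ :=
  a • ((Polynomial.C ((eα - eβ) * (eα - eγ)) - (Polynomial.X - Polynomial.C eα) ^ 2) *
        Polynomial.derivative f +
      (n : ℂ) • ((Polynomial.X - Polynomial.C eα) * f))

lemma Sop_eq_smul_Sop_one (a u v w : ℂ) (n : ℕ) (f : Polynomial ℂ) :
    Sop a u v w n f = a • Sop 1 u v w n f := by
  simp only [Sop, one_smul]

lemma Sop_smul_right (a u v w k : ℂ) (n : ℕ) (f : Polynomial ℂ) :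
    Sop a u v w n (k • f) = k • Sop a u v w n f := by
  simp only [Sop, derivative_smul, mul_smul_comm]
  rw [smul_comm (n : ℂ) k, ← smul_add, smul_comm a k]

lemma Sop_one_commutator {u v w : ℂ} (hsum : u + v + w = 0) (n : ℕ) (f : Polynomial ℂ) :
    Sop 1 u v w n (Sop 1 v w u n f) - Sop 1 v w u n (Sop 1 u v w n f)
      = (2 * (u - v)) • Sop 1 w u v n f := by
  obtain rfl : w = -u - v := by linear_combination hsum
  simp only [Sop, one_smul, smul_eq_C_mul, map_mul, map_sub, map_neg, map_natCast, map_ofNat,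
    derivative_mul, derivative_add, derivative_pow, derivative_X,
    derivative_C, derivative_natCast]
  ring

lemma Sop_commutator {u v w a b c k : ℂ} (hsum : u + v + w = 0)
    (hk : 2 * a * b * (u - v) = k * c) (n : ℕ) (f : Polynomial ℂ) :
    Sop a u v w n (Sop b v w u n f) - Sop b v w u n (Sop a u v w n f) = k • Sop c w u v n f := by
  rw [Sop_eq_smul_Sop_one a, Sop_eq_smul_Sop_one b, Sop_eq_smul_Sop_one a, Sop_eq_smul_Sop_one b,
    Sop_smul_right, Sop_smul_right, smul_smul, smul_smul, mul_comm b, ← smul_sub,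
    Sop_one_commutator hsum, smul_smul, Sop_eq_smul_Sop_one c, smul_smul, ← hk]
  congr 1
  ring

lemma ne_zero_of_sq_eq_sub {s x y : ℂ} (hs : s ^ 2 = x - y) (hxy : x ≠ y) : s ≠ 0 := by
  rintro rfl
  exact hxy (sub_eq_zero.mp (by simpa using hs.symm))

/-- The operators `S¹, S², S³` of the elliptic realization of the spin-ℓ
representation satisfy `[S^a, S^b] = 2i S^c` for every cyclic permutation
`(a,b,c)` of `(1,2,3)`; in particular they define a representation of `sl₂(ℂ)`. -/
theorem Sop_sl2_relations (e1 e2 e3 s12 s13 s23 : ℂ)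
    (h12 : e1 ≠ e2) (h13 : e1 ≠ e3) (h23 : e2 ≠ e3)
    (hsum : e1 + e2 + e3 = 0)
    (hs12 : s12 ^ 2 = e1 - e2) (hs13 : s13 ^ 2 = e1 - e3) (hs23 : s23 ^ 2 = e2 - e3)
    (n : ℕ)
    (S1 S2 S3 : Polynomial ℂ → Polynomial ℂ)
    (hS1 : S1 = Sop (1 / (s12 * s13)) e1 e2 e3 n)
    (hS2 : S2 = Sop (Complex.I / (s12 * s23)) e2 e3 e1 n)
    (hS3 : S3 = Sop (1 / (s23 * s13)) e3 e1 e2 n) :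
    (∀ f : Polynomial ℂ, S1 (S2 f) - S2 (S1 f) = (2 * Complex.I) • S3 f) ∧
    (∀ f : Polynomial ℂ, S2 (S3 f) - S3 (S2 f) = (2 * Complex.I) • S1 f) ∧
    (∀ f : Polynomial ℂ, S3 (S1 f) - S1 (S3 f) = (2 * Complex.I) • S2 f) := by
  have hs12_ne := ne_zero_of_sq_eq_sub hs12 h12
  have hs13_ne := ne_zero_of_sq_eq_sub hs13 h13
  have hs23_ne := ne_zero_of_sq_eq_sub hs23 h23
  subst hS1 hS2 hS3
  refine ⟨Sop_commutator hsum ?_ n, Sop_commutator (by linear_combination hsum) ?_ n,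
    Sop_commutator (by linear_combination hsum) ?_ n⟩
  · rw [← hs12]
    field_simp
  · rw [← hs23]
    field_simp
  · rw [show e3 - e1 = -s13 ^ 2 by linear_combination hs13]
    field_simp
    linear_combination (-1 : ℂ) * Complex.I_sq
end

section
/- On V^{(ℓ)} with the hermitian inner product for which the basis {(η-e₂)^j}_{j=0,…,2ℓ} is orthogonal with ⟨(η-e₂)^j,(η-e₂)^j⟩ = 2π·(2j)!!(4ℓ-2j)!!/(4ℓ+2)!!·(e₁-e₂)^{j+1}(e₂-e₃)^{j+1}, the operators S^a (a = 1,2,3) of the elliptic realization are self-adjoint: ⟨S^a f, g⟩ = ⟨f, S^a g⟩ for all f, g ∈ V^{(ℓ)}. -/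
open Complex Polynomial

private noncomputable def bas (e2 : ℝ) (j : ℕ) : Polynomial ℂ := (X - C (e2 : ℂ)) ^ j

private noncomputable def Nv (e1 e2 e3 : ℝ) (n j : ℕ) : ℂ :=
  2 * Real.pi * ((Nat.doubleFactorial (2 * j) : ℂ) *
    (Nat.doubleFactorial (2 * n - 2 * j) : ℂ) / (Nat.doubleFactorial (2 * n + 2) : ℂ)) *
    ((e1 : ℂ) - (e2 : ℂ)) ^ (j + 1) * ((e2 : ℂ) - (e3 : ℂ)) ^ (j + 1)

private lemma Nv_succ (e1 e2 e3 : ℝ) (n j : ℕ) (h : j + 1 ≤ n) :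
    ((n : ℂ) - j) * Nv e1 e2 e3 n (j + 1) =
      ((j : ℂ) + 1) * (((e1 : ℂ) - e2) * ((e2 : ℂ) - e3)) * Nv e1 e2 e3 n j := by
  obtain ⟨m, rfl⟩ : ∃ m, n = j + 1 + m := ⟨n - (j + 1), by omega⟩
  simp only [Nv]
  have h1 : 2 * (j + 1 + m) - 2 * (j + 1) = 2 * m := by omega
  have h2 : 2 * (j + 1 + m) - 2 * j = 2 * m + 2 := by omega
  have h3 : 2 * (j + 1) = 2 * j + 2 := by ring
  rw [h1, h2, h3,
    show (2*j+2).doubleFactorial = (2*j+2)*(2*j).doubleFactorial from Nat.doubleFactorial_add_two _,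
    show (2*m+2).doubleFactorial = (2*m+2)*(2*m).doubleFactorial from Nat.doubleFactorial_add_two _]
  push_cast
  ring

private lemma mem_span_shifted (e : ℂ) (n : ℕ) (f : Polynomial ℂ) (hf : f.degree ≤ (n : ℕ)) :
    f ∈ Submodule.span ℂ ((fun j => (X - C e) ^ j) '' Set.Iic n) := by
  have hnat : f.natDegree ≤ n := natDegree_le_iff_degree_le.mpr hf
  rw [← Polynomial.sum_taylor_eq f e]
  refine Submodule.sum_mem _ fun i hi => ?_
  simp only [← smul_eq_C_mul]
  refine Submodule.smul_mem _ _ (Submodule.subset_span ⟨i, ?_, rfl⟩)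
  have := Polynomial.le_natDegree_of_mem_supp i hi
  rw [Polynomial.natDegree_taylor] at this
  exact le_trans this hnat

private lemma Tb (A a e : ℂ) (n j : ℕ) :
    (C A - (X - C a) ^ 2) * derivative ((X - C e) ^ j) +
      (n : ℂ) • ((X - C a) * (X - C e) ^ j) =
    C ((n : ℂ) - j) * (X - C e) ^ (j + 1) +
      C (((n : ℂ) - 2 * j) * (e - a)) * (X - C e) ^ j +
      C ((j : ℂ) * (A - (e - a) ^ 2)) * (X - C e) ^ (j - 1) := by
  cases j with
  | zero => simp [smul_eq_C_mul]; ring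
  | succ j =>
      rw [derivative_pow, Polynomial.derivative_X_sub_C]
      simp only [smul_eq_C_mul, pow_succ, Nat.add_sub_cancel, Nat.cast_add, Nat.cast_one,
        C_sub, C_mul, C_add, map_ofNat, C_1, C_pow, map_natCast]
      ring

private lemma key (e1 e2 e3 : ℝ) (n : ℕ)
    (ip : Polynomial ℂ → Polynomial ℂ → ℂ)
    (ip_add_left : ∀ f g h, ip (f + g) h = ip f h + ip g h)
    (ip_add_right : ∀ f g h, ip f (g + h) = ip f g + ip f h)
    (ip_smul_left : ∀ (c : ℂ) f g, ip (c • f) g = (starRingEnd ℂ) c * ip f g)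
    (ip_smul_right : ∀ (c : ℂ) f g, ip f (c • g) = c * ip f g)
    (ip_basis : ∀ j k : ℕ, j ≤ n → k ≤ n →
      ip ((Polynomial.X - Polynomial.C (e2 : ℂ)) ^ j)
         ((Polynomial.X - Polynomial.C (e2 : ℂ)) ^ k) =
        if j = k then
          2 * Real.pi * ((Nat.doubleFactorial (2 * j) : ℂ) *
            (Nat.doubleFactorial (2 * n - 2 * j) : ℂ) /
            (Nat.doubleFactorial (2 * n + 2) : ℂ)) *
            ((e1 : ℂ) - (e2 : ℂ)) ^ (j + 1) * ((e2 : ℂ) - (e3 : ℂ)) ^ (j + 1)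
        else 0)
    (p q r ε : ℝ)
    (hA : (p - q) * (p - r) - (e2 - p) ^ 2 = ε * ((e1 - e2) * (e2 - e3)))
    (hε : ε * ε = 1) (hc : ε * (e2 - p) = e2 - p) :
    ∀ f g : Polynomial ℂ, f.degree ≤ (n : ℕ) → g.degree ≤ (n : ℕ) →
      ip (Sop 1 (p : ℂ) (q : ℂ) (r : ℂ) n f) g =
        (ε : ℂ) * ip f (Sop 1 (p : ℂ) (q : ℂ) (r : ℂ) n g) := by
  have hA' : ((p : ℂ) - q) * ((p : ℂ) - r) - ((e2 : ℂ) - p) ^ 2 =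
      (ε : ℂ) * (((e1 : ℂ) - e2) * ((e2 : ℂ) - e3)) := by
    have := congrArg (fun x : ℝ => (x : ℂ)) hA
    push_cast at this; exact this
  have hε' : (ε : ℂ) * ε = 1 := by exact_mod_cast hε
  have hc' : (ε : ℂ) * ((e2 : ℂ) - p) = (e2 : ℂ) - p := by
    have := congrArg (fun x : ℝ => (x : ℂ)) hc
    push_cast at this; exact this
  have hS : ∀ f, Sop 1 (p : ℂ) (q : ℂ) (r : ℂ) n f =
      (C (((p : ℂ) - q) * ((p : ℂ) - r)) - (X - C (p : ℂ)) ^ 2) * derivative f +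
        (n : ℂ) • ((X - C (p : ℂ)) * f) := fun f => by
    simp only [Sop, one_smul]
  have ip0l : ∀ g, ip 0 g = 0 := by
    intro g
    have h := ip_add_left 0 0 g
    rw [add_zero] at h
    exact (right_eq_add.mp h)
  have ip0r : ∀ f, ip f 0 = 0 := by
    intro f
    have h := ip_add_right f 0 0
    rw [add_zero] at h
    exact (right_eq_add.mp h)
  have T0 : Sop 1 (p : ℂ) (q : ℂ) (r : ℂ) n 0 = 0 := by
    simp [hS]
  have Tadd : ∀ f g, Sop 1 (p : ℂ) (q : ℂ) (r : ℂ) n (f + g) =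
      Sop 1 (p : ℂ) (q : ℂ) (r : ℂ) n f + Sop 1 (p : ℂ) (q : ℂ) (r : ℂ) n g := by
    intro f g
    simp only [hS, derivative_add, smul_eq_C_mul]
    ring
  have Tsmul : ∀ (c : ℂ) f, Sop 1 (p : ℂ) (q : ℂ) (r : ℂ) n (c • f) =
      c • Sop 1 (p : ℂ) (q : ℂ) (r : ℂ) n f := by
    intro c f
    simp only [hS, derivative_smul]
    simp only [smul_eq_C_mul]
    ring
  have ipb : ∀ a c : ℕ, a ≤ n → c ≤ n →
      ip (bas e2 a) (bas e2 c) = if a = c then Nv e1 e2 e3 n a else 0 := by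
    intro a c ha hc
    simp only [bas]
    rw [ip_basis a c ha hc]; rfl
  have ipd : ∀ a : ℕ, a ≤ n → ip (bas e2 a) (bas e2 a) = Nv e1 e2 e3 n a :=
    fun a ha => by rw [ipb a a ha ha, if_pos rfl]
  have ipz : ∀ a c : ℕ, a ≤ n → c ≤ n → a ≠ c → ip (bas e2 a) (bas e2 c) = 0 :=
    fun a c ha hc hne => by rw [ipb a c ha hc, if_neg hne]
  have Tb' : ∀ j : ℕ, Sop 1 (p : ℂ) (q : ℂ) (r : ℂ) n (bas e2 j) =
      C ((n : ℂ) - j) * bas e2 (j + 1) +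
        C (((n : ℂ) - 2 * j) * ((e2 : ℂ) - p)) * bas e2 j +
        C ((j : ℂ) * (((p : ℂ) - q) * ((p : ℂ) - r) - ((e2 : ℂ) - p) ^ 2)) * bas e2 (j - 1) := by
    intro j
    simp only [bas, hS]
    exact Tb _ _ _ n j
  have hbase : ∀ j k : ℕ, j ≤ n → k ≤ n →
      ip (Sop 1 (p : ℂ) (q : ℂ) (r : ℂ) n (bas e2 j)) (bas e2 k) =
        (ε : ℂ) * ip (bas e2 j) (Sop 1 (p : ℂ) (q : ℂ) (r : ℂ) n (bas e2 k)) := by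
    intro j k hj hk
    have ipCl : ∀ (x : ℂ) u v, ip (C x * u) v = (starRingEnd ℂ) x * ip u v :=
      fun x u v => by rw [← smul_eq_C_mul, ip_smul_left]
    have ipCr : ∀ (x : ℂ) u v, ip u (C x * v) = x * ip u v :=
      fun x u v => by rw [← smul_eq_C_mul, ip_smul_right]
    rw [Tb' j, Tb' k]
    simp only [ip_add_left, ip_add_right, ipCl, ipCr]
    simp only [map_sub, map_mul, map_pow, map_natCast, map_ofNat, Complex.conj_ofReal]
    rcases Nat.lt_trichotomy j k with hlt | rfl | hgt
    · rcases eq_or_lt_of_le (Nat.succ_le_of_lt hlt) with rfl | hlt2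
      · -- k = j + 1
        simp only [Nat.succ_eq_add_one] at hk ⊢
        rw [Nat.add_sub_cancel, ipd (j + 1) hk, ipd j hj,
          ipz j (j + 1) hj hk (by omega), ipz (j - 1) (j + 1) (by omega) hk (by omega)]
        by_cases hn : j + 1 = n
        · subst hn
          push_cast
          linear_combination (norm := (push_cast; ring1)) (Nv_succ e1 e2 e3 (j + 1) j (by omega)) -
            (ε : ℂ) * ((j : ℂ) + 1) * (Nv e1 e2 e3 (j + 1) j) * hA' -
            ((j : ℂ) + 1) * (((e1 : ℂ) - e2) * ((e2 : ℂ) - e3)) * (Nv e1 e2 e3 (j + 1) j) * hε'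
        · have h2 : j + 1 + 1 ≤ n := by omega
          rw [ipz j (j + 1 + 1) hj h2 (by omega)]
          push_cast
          linear_combination (norm := (push_cast; ring1)) (Nv_succ e1 e2 e3 n j hk) -
            (ε : ℂ) * ((j : ℂ) + 1) * (Nv e1 e2 e3 n j) * hA' -
            ((j : ℂ) + 1) * (((e1 : ℂ) - e2) * ((e2 : ℂ) - e3)) * (Nv e1 e2 e3 n j) * hε'
      · -- j + 1 < k
        have h1 : j + 1 ≤ n := by omega
        rw [ipz (j + 1) k h1 hk (by omega), ipz j k hj hk (by omega),
          ipz (j - 1) k (by omega) hk (by omega), ipz j (k - 1) hj (by omega) (by omega)]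
        by_cases hn : k = n
        · subst hn; push_cast; ring
        · rw [ipz j (k + 1) hj (by omega) (by omega)]
          ring
    · -- j = k
      rw [ipd j hj]
      by_cases h0 : j = 0
      · subst h0
        by_cases hn : n = 0
        · subst hn; push_cast; ring
        · rw [ipz (0 + 1) 0 (by omega) hj (by omega), ipz 0 (0 + 1) hj (by omega) (by omega)]
          push_cast
          linear_combination (norm := (push_cast; ring1)) (-((n : ℂ) - 2 * 0) * Nv e1 e2 e3 n 0) * hc'
      · rw [ipz (j - 1) j (by omega) hj (by omega), ipz j (j - 1) hj (by omega) (by omega)]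
        by_cases hn : j = n
        · subst hn
          push_cast
          linear_combination (norm := (push_cast; ring1)) (-((j : ℂ) - 2 * (j : ℂ)) * Nv e1 e2 e3 j j) * hc'
        · rw [ipz (j + 1) j (by omega) hj (by omega), ipz j (j + 1) hj (by omega) (by omega)]
          push_cast
          linear_combination (norm := (push_cast; ring1)) (-((n : ℂ) - 2 * (j : ℂ)) * Nv e1 e2 e3 n j) * hc'
    · rcases eq_or_lt_of_le (Nat.succ_le_of_lt hgt) with rfl | hlt2
      · -- j = k + 1
        simp only [Nat.succ_eq_add_one] at hj ⊢
        rw [Nat.add_sub_cancel, ipd (k + 1) hj, ipd k hk,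
          ipz (k + 1) k hj hk (by omega), ipz (k + 1) (k - 1) hj (by omega) (by omega)]
        by_cases hn : k + 1 = n
        · subst hn
          push_cast
          linear_combination (norm := (push_cast; ring1)) ((k : ℂ) + 1) * (Nv e1 e2 e3 (k + 1) k) * hA' -
            (ε : ℂ) * (Nv_succ e1 e2 e3 (k + 1) k (by omega))
        · have h2 : k + 1 + 1 ≤ n := by omega
          rw [ipz (k + 1 + 1) k h2 hk (by omega)]
          push_cast
          linear_combination (norm := (push_cast; ring1)) ((k : ℂ) + 1) * (Nv e1 e2 e3 n k) * hA' -
            (ε : ℂ) * (Nv_succ e1 e2 e3 n k hj)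
      · -- k + 1 < j
        have h1 : k + 1 ≤ n := by omega
        rw [ipz j (k + 1) hj h1 (by omega), ipz j k hj hk (by omega),
          ipz j (k - 1) hj (by omega) (by omega), ipz (j - 1) k (by omega) hk (by omega)]
        by_cases hn : j = n
        · subst hn; push_cast; ring
        · rw [ipz (j + 1) k (by omega) hk (by omega)]
          ring
  intro f g hf hg
  have hf' := mem_span_shifted (e2 : ℂ) n f hf
  have hg' := mem_span_shifted (e2 : ℂ) n g hg
  clear hf hg
  revert g
  induction hf' using Submodule.span_induction with
  | mem x hx =>
      intro g hg'
      induction hg' using Submodule.span_induction with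
      | mem y hy =>
          obtain ⟨j, hj, rfl⟩ := hx
          obtain ⟨k, hk, rfl⟩ := hy
          exact hbase j k (Set.mem_Iic.mp hj) (Set.mem_Iic.mp hk)
      | zero => rw [T0, ip0r, ip0r, mul_zero]
      | add y z hy hz ihy ihz => rw [Tadd, ip_add_right, ip_add_right, ihy, ihz]; ring
      | smul c y hy ih => rw [Tsmul, ip_smul_right, ip_smul_right, ih]; ring
  | zero => intro g hg'; rw [T0, ip0l, ip0l, mul_zero]
  | add x y hx hy ihx ihy =>
      intro g hg'
      rw [Tadd, ip_add_left, ip_add_left, ihx g hg', ihy g hg']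
      ring
  | smul c x hx ih =>
      intro g hg'
      rw [Tsmul, ip_smul_left, ip_smul_left, ih g hg']
      ring

/-- With respect to the hermitian inner product on `V^{(ℓ)}` for which the basis
`{(η-e₂)^j}` is orthogonal with
`⟨(η-e₂)^j, (η-e₂)^j⟩ = 2π (2j)‼(4ℓ-2j)‼/(4ℓ+2)‼ (e₁-e₂)^{j+1}(e₂-e₃)^{j+1}`,
the operators `S^a` are self-adjoint.  Here `n = 2ℓ`. -/
theorem Sop_self_adjoint (e1 e2 e3 : ℝ) (h12 : e2 < e1) (h23 : e3 < e2)
    (hsum : e1 + e2 + e3 = 0) (n : ℕ)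
    (ip : Polynomial ℂ → Polynomial ℂ → ℂ)
    (ip_add_left : ∀ f g h, ip (f + g) h = ip f h + ip g h)
    (ip_add_right : ∀ f g h, ip f (g + h) = ip f g + ip f h)
    (ip_smul_left : ∀ (c : ℂ) f g, ip (c • f) g = (starRingEnd ℂ) c * ip f g)
    (ip_smul_right : ∀ (c : ℂ) f g, ip f (c • g) = c * ip f g)
    (ip_basis : ∀ j k : ℕ, j ≤ n → k ≤ n →
      ip ((Polynomial.X - Polynomial.C (e2 : ℂ)) ^ j)
         ((Polynomial.X - Polynomial.C (e2 : ℂ)) ^ k) =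
        if j = k then
          2 * Real.pi * ((Nat.doubleFactorial (2 * j) : ℂ) *
            (Nat.doubleFactorial (2 * n - 2 * j) : ℂ) /
            (Nat.doubleFactorial (2 * n + 2) : ℂ)) *
            ((e1 : ℂ) - (e2 : ℂ)) ^ (j + 1) * ((e2 : ℂ) - (e3 : ℂ)) ^ (j + 1)
        else 0)
    (S1 S2 S3 : Polynomial ℂ → Polynomial ℂ)
    (hS1 : S1 = Sop (1 / ((Real.sqrt (e1 - e2) : ℂ) * (Real.sqrt (e1 - e3) : ℂ)))
      (e1 : ℂ) (e2 : ℂ) (e3 : ℂ) n)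
    (hS2 : S2 = Sop (Complex.I / ((Real.sqrt (e1 - e2) : ℂ) * (Real.sqrt (e2 - e3) : ℂ)))
      (e2 : ℂ) (e3 : ℂ) (e1 : ℂ) n)
    (hS3 : S3 = Sop (1 / ((Real.sqrt (e2 - e3) : ℂ) * (Real.sqrt (e1 - e3) : ℂ)))
      (e3 : ℂ) (e1 : ℂ) (e2 : ℂ) n) :
    ∀ f g : Polynomial ℂ, f.degree ≤ (n : ℕ) → g.degree ≤ (n : ℕ) →
      ip (S1 f) g = ip f (S1 g) ∧ ip (S2 f) g = ip f (S2 g) ∧ ip (S3 f) g = ip f (S3 g) := by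
  intro f g hf hg
  have hsc : ∀ (a eα eβ eγ : ℂ) (h : Polynomial ℂ),
      Sop a eα eβ eγ n h = a • Sop 1 eα eβ eγ n h := by
    intro a eα eβ eγ h
    simp only [Sop, one_smul]
  refine ⟨?_, ?_, ?_⟩
  · have k1 := key e1 e2 e3 n ip ip_add_left ip_add_right ip_smul_left ip_smul_right ip_basis
      e1 e2 e3 1 (by ring) (by norm_num) (by ring) f g hf hg
    rw [hS1, hsc _ _ _ _ f, hsc _ _ _ _ g, ip_smul_left, ip_smul_right, k1]
    simp only [map_div₀, map_one, map_mul, Complex.conj_ofReal]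
    push_cast
    ring
  · have k2 := key e1 e2 e3 n ip ip_add_left ip_add_right ip_smul_left ip_smul_right ip_basis
      e2 e3 e1 (-1) (by ring) (by norm_num) (by ring) f g hf hg
    rw [hS2, hsc _ _ _ _ f, hsc _ _ _ _ g, ip_smul_left, ip_smul_right, k2]
    simp only [map_div₀, map_one, map_mul, Complex.conj_ofReal, Complex.conj_I]
    push_cast
    ring
  · have k3 := key e1 e2 e3 n ip ip_add_left ip_add_right ip_smul_left ip_smul_right ip_basis
      e3 e1 e2 1 (by ring) (by norm_num) (by ring) f g hf hg
    rw [hS3, hsc _ _ _ _ f, hsc _ _ _ _ g, ip_smul_left, ip_smul_right, k3]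
    simp only [map_div₀, map_one, map_mul, Complex.conj_ofReal]
    push_cast
    ring
end
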